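/- Let ρ₁ ∈ (0,1), ρ₂ = √(1−ρ₁²), H = (ρ₁²−ρ₂²)/(ρ₁ρ₂). Then E₂(Σ_{ρ₁}) = (1/3 + (2/27)H²)(ρ₁² − ρ₂²)(2π)², and E₂(Σ_{ρ₁}) → +∞ as ρ₁ → 1⁻ and E₂(Σ_{ρ₁}) → −∞ as ρ₁ → 0⁺. -/

import Mathlib

open Filter Topology Set

/-! On `Σ_{ρ₁}` the integrand is constant, so `E₂` is `(2π)²` times it. Since `H ρ₁ ρ₂ = ρ₁² - ρ₂²`
and `ρ₂² = 1 - ρ₁²`, this is `(2π)²` times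
`(2ρ₁² - 1)/3 + (2/27) (2ρ₁² - 1)³ / (ρ₁²(1 - ρ₁²))`. The denominator tends to `0⁺` at both ends
of `(0, 1)`, while the numerator `(2ρ₁² - 1)³` tends to `1` at `ρ₁ = 1` and to `-1` at `ρ₁ = 0`. -/

lemma intervalIntegral_intervalIntegral_const (a b a' b' c : ℝ) :
    ∫ _ in a..b, ∫ _ in a'..b', c = (b - a) * ((b' - a') * c) := by
  simp only [intervalIntegral.integral_const, smul_eq_mul]

lemma cr_energy_integrand_eq {x y H : ℝ} (hH : H * (x * y) = x ^ 2 - y ^ 2) :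
    ((1/6) * 2 * H + (2/27) * H ^ 3) * (x * y) = (1/3 + (2/27) * H ^ 2) * (x ^ 2 - y ^ 2) := by
  linear_combination (1/3 + (2/27) * H ^ 2) * hH

noncomputable def torusEnergyProfile (t : ℝ) : ℝ :=
  (2 * t ^ 2 - 1) / 3 + (2/27) * (2 * t ^ 2 - 1) ^ 3 * (t ^ 2 * (1 - t ^ 2))⁻¹

lemma cr_energy_closedForm_eq_torusEnergyProfile {t s H : ℝ} (ht : t ≠ 0) (hs : s ≠ 0)
    (hs2 : s ^ 2 = 1 - t ^ 2) (hH : H = (t ^ 2 - s ^ 2) / (t * s)) :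
    (1/3 + (2/27) * H ^ 2) * (t ^ 2 - s ^ 2) = torusEnergyProfile t := by
  have hts : t ^ 2 * (1 - t ^ 2) ≠ 0 := by rw [← hs2]; positivity
  rw [torusEnergyProfile, hH, div_pow, mul_pow, hs2]
  field_simp
  ring

lemma tendsto_sq_mul_one_sub_sq_nhdsGT_zero {l : Filter ℝ} {a : ℝ} (hl : l ≤ 𝓝 a)
    (ha : a ^ 2 * (1 - a ^ 2) = 0) (hmem : Ioo 0 1 ∈ l) :
    Tendsto (fun t : ℝ => t ^ 2 * (1 - t ^ 2)) l (𝓝[>] 0) := by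
  refine tendsto_nhdsWithin_iff.2 ⟨?_, ?_⟩
  · rw [← ha]
    exact (Continuous.tendsto (by fun_prop) a).mono_left hl
  · filter_upwards [hmem] with t ⟨ht0, ht1⟩
    exact mul_pos (pow_pos ht0 2) (by nlinarith)

lemma tendsto_torusEnergyProfile_nhdsLT_one : Tendsto torusEnergyProfile (𝓝[<] 1) atTop := by
  have hnum : Tendsto (fun t : ℝ => (2/27) * (2 * t ^ 2 - 1) ^ 3) (𝓝[<] 1)
      (𝓝 ((2/27) * (2 * 1 ^ 2 - 1) ^ 3)) :=
    (Continuous.tendsto (by fun_prop) (1 : ℝ)).mono_left nhdsWithin_le_nhds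
  have hden := tendsto_sq_mul_one_sub_sq_nhdsGT_zero nhdsWithin_le_nhds (by norm_num)
    (Ioo_mem_nhdsLT zero_lt_one)
  have hlin : Tendsto (fun t : ℝ => (2 * t ^ 2 - 1) / 3) (𝓝[<] 1) (𝓝 ((2 * 1 ^ 2 - 1) / 3)) :=
    (Continuous.tendsto (by fun_prop) (1 : ℝ)).mono_left nhdsWithin_le_nhds
  exact hlin.add_atTop
    (hnum.pos_mul_atTop (by norm_num) hden.inv_tendsto_nhdsGT_zero)

lemma tendsto_torusEnergyProfile_nhdsGT_zero : Tendsto torusEnergyProfile (𝓝[>] 0) atBot := by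
  have hnum : Tendsto (fun t : ℝ => (2/27) * (2 * t ^ 2 - 1) ^ 3) (𝓝[>] 0)
      (𝓝 ((2/27) * (2 * 0 ^ 2 - 1) ^ 3)) :=
    (Continuous.tendsto (by fun_prop) (0 : ℝ)).mono_left nhdsWithin_le_nhds
  have hden := tendsto_sq_mul_one_sub_sq_nhdsGT_zero nhdsWithin_le_nhds (by norm_num)
    (Ioo_mem_nhdsGT zero_lt_one)
  have hlin : Tendsto (fun t : ℝ => (2 * t ^ 2 - 1) / 3) (𝓝[>] 0) (𝓝 ((2 * 0 ^ 2 - 1) / 3)) :=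
    (Continuous.tendsto (by fun_prop) (0 : ℝ)).mono_left nhdsWithin_le_nhds
  exact hlin.add_atBot
    (hnum.neg_mul_atTop (by norm_num) hden.inv_tendsto_nhdsGT_zero)

/-- For `Σ_{ρ₁} ⊂ S³` with `ρ₂ = √(1-ρ₁²)` and `H = (ρ₁²-ρ₂²)/(ρ₁ρ₂)`,
the second CR energy `E₂(Σ_{ρ₁}) = ∫((1/6)WH + (2/27)H³) ρ₁ρ₂ dφ₁dφ₂`
(with `W = 2`) equals `(1/3 + (2/27)H²)(ρ₁² - ρ₂²)(2π)²`, and it tends to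
`+∞` as `ρ₁ → 1⁻` and to `-∞` as `ρ₁ → 0⁺`. -/
theorem stmt18 (E₂ ρ₂ H : ℝ → ℝ)
    (hρ₂ : ∀ ρ₁, ρ₂ ρ₁ = Real.sqrt (1 - ρ₁^2))
    (hH : ∀ ρ₁, H ρ₁ = (ρ₁^2 - (ρ₂ ρ₁)^2) / (ρ₁ * ρ₂ ρ₁))
    (hE₂ : ∀ ρ₁, E₂ ρ₁ =
      ∫ _φ₁ in (0:ℝ)..(2*Real.pi), ∫ _φ₂ in (0:ℝ)..(2*Real.pi),
        ((1/6)*2*(H ρ₁) + (2/27)*(H ρ₁)^3) * (ρ₁ * ρ₂ ρ₁)) :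
    (∀ ρ₁ ∈ Set.Ioo (0:ℝ) 1,
      E₂ ρ₁ = (1/3 + (2/27)*(H ρ₁)^2) * (ρ₁^2 - (ρ₂ ρ₁)^2) * (2*Real.pi)^2)
    ∧ Tendsto E₂ (nhdsWithin 1 (Set.Iio 1)) atTop
    ∧ Tendsto E₂ (nhdsWithin 0 (Set.Ioi 0)) atBot := by
  have hρ₂_pos : ∀ ρ₁ ∈ Ioo (0:ℝ) 1, 0 < ρ₂ ρ₁ := fun ρ₁ ⟨h0, h1⟩ => by
    rw [hρ₂]; exact Real.sqrt_pos.2 (by nlinarith)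
  have hρ₂_sq : ∀ ρ₁ ∈ Ioo (0:ℝ) 1, ρ₂ ρ₁ ^ 2 = 1 - ρ₁ ^ 2 := fun ρ₁ ⟨h0, h1⟩ => by
    rw [hρ₂, Real.sq_sqrt (by nlinarith)]
  have hclosed : ∀ ρ₁ ∈ Ioo (0:ℝ) 1,
      E₂ ρ₁ = (1/3 + (2/27)*(H ρ₁)^2) * (ρ₁^2 - (ρ₂ ρ₁)^2) * (2*Real.pi)^2 := fun ρ₁ h => by
    have hHρ : H ρ₁ * (ρ₁ * ρ₂ ρ₁) = ρ₁ ^ 2 - ρ₂ ρ₁ ^ 2 := by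
      rw [hH, div_mul_cancel₀ _ (mul_pos h.1 (hρ₂_pos ρ₁ h)).ne']
    rw [hE₂, intervalIntegral_intervalIntegral_const, cr_energy_integrand_eq hHρ]
    ring
  have hprofile : ∀ ρ₁ ∈ Ioo (0:ℝ) 1, (2 * Real.pi) ^ 2 * torusEnergyProfile ρ₁ = E₂ ρ₁ :=
    fun ρ₁ h => by
      rw [hclosed ρ₁ h, ← cr_energy_closedForm_eq_torusEnergyProfile h.1.ne' (hρ₂_pos ρ₁ h).ne'
        (hρ₂_sq ρ₁ h) (hH ρ₁)]
      ring
  have hπ : 0 < (2 * Real.pi) ^ 2 := by positivity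
  refine ⟨hclosed, ?_, ?_⟩
  · exact (tendsto_torusEnergyProfile_nhdsLT_one.const_mul_atTop hπ).congr'
      (eventually_of_mem (Ioo_mem_nhdsLT zero_lt_one) hprofile)
  · exact (tendsto_torusEnergyProfile_nhdsGT_zero.const_mul_atBot hπ).congr'
      (eventually_of_mem (Ioo_mem_nhdsGT zero_lt_one) hprofile)
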